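/- Let (u, v, w) be a smooth solution of (KB) and (φ, ψ, θ) a smooth solution of the adjoint system (AKB) on ℝ². Define Cˣ = (1/3)ψu² − (5/6)t·uₜφ − (5/6)t·vₜψ − (5/6)t·wₜθ + (5/24)t·uₓθₓₓ + (1/6)vθu − (5/24)t·uₓₓθₓ + (1/4)θₓₓ − (2/3)ψv − θw − (5/6)φu and Cᵗ = φ + (5/6)φt·uₓ − (2/3)ψu + (5/6)ψt·vₓ − (1/3)vθ + (5/6)θt·wₓ (subscripts denote partial derivatives). Then ∂ₓCˣ + ∂ₜCᵗ = 0 identically on ℝ². -/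

import Mathlib

/-- Partial derivative with respect to the first (space) variable. -/
noncomputable def pdx (f : ℝ → ℝ → ℝ) (x t : ℝ) : ℝ := deriv (fun y => f y t) x

/-- Partial derivative with respect to the second (time) variable. -/
noncomputable def pdt (f : ℝ → ℝ → ℝ) (x t : ℝ) : ℝ := deriv (fun s => f x s) t

/-- The three-field Kaup–Boussinesq system (KB) holds for `(u,v,w)` at the point `(x,t)`:
`∂ₜu = (3/2)u∂ₓu + ∂ₓv`, `∂ₜv = v∂ₓu + (1/2)u∂ₓv + ∂ₓw`,
`∂ₜw = −(1/4)∂ₓ³u + w∂ₓu + (1/2)u∂ₓw`. -/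
def KBAt (u v w : ℝ → ℝ → ℝ) (x t : ℝ) : Prop :=
  pdt u x t = 3/2 * u x t * pdx u x t + pdx v x t ∧
  pdt v x t = v x t * pdx u x t + 1/2 * u x t * pdx v x t + pdx w x t ∧
  pdt w x t = -(1/4) * pdx (pdx (pdx u)) x t + w x t * pdx u x t
    + 1/2 * u x t * pdx w x t

/-- `f : ℝ × ℝ → ℝ` (curried) is smooth in both variables jointly. -/
def Smooth2 (f : ℝ → ℝ → ℝ) : Prop := ContDiff ℝ (⊤ : ℕ∞) (fun p : ℝ × ℝ => f p.1 p.2)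

/-- The adjoint system (AKB) of the three-field Kaup–Boussinesq system holds for
`(φ,ψ,θ)` (relative to the fields `(u,v,w)`) at the point `(x,t)`:
`∂ₜφ = (1/2)ψ∂ₓv + (1/2)θ∂ₓw + (3/2)u∂ₓφ + v∂ₓψ + w∂ₓθ − (1/4)∂ₓ³θ`,
`∂ₜψ = ∂ₓφ + (1/2)u∂ₓψ − (1/2)ψ∂ₓu`,
`∂ₜθ = ∂ₓψ + (1/2)u∂ₓθ − (1/2)θ∂ₓu`. -/
def AKBAt (φ ψ θ u v w : ℝ → ℝ → ℝ) (x t : ℝ) : Prop :=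
  pdt φ x t = 1/2 * ψ x t * pdx v x t + 1/2 * θ x t * pdx w x t
    + 3/2 * u x t * pdx φ x t + v x t * pdx ψ x t + w x t * pdx θ x t
    - 1/4 * pdx (pdx (pdx θ)) x t ∧
  pdt ψ x t = pdx φ x t + 1/2 * u x t * pdx ψ x t - 1/2 * ψ x t * pdx u x t ∧
  pdt θ x t = pdx ψ x t + 1/2 * u x t * pdx θ x t - 1/2 * θ x t * pdx u x t


namespace Smooth2

lemma sliceX {f : ℝ → ℝ → ℝ} (hf : Smooth2 f) (t : ℝ) : ContDiff ℝ (⊤ : ℕ∞) (fun y => f y t) :=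
  hf.comp (contDiff_id.prodMk contDiff_const)

lemma sliceT {f : ℝ → ℝ → ℝ} (hf : Smooth2 f) (x : ℝ) : ContDiff ℝ (⊤ : ℕ∞) (fun s => f x s) :=
  hf.comp (contDiff_const.prodMk contDiff_id)

lemma hasDerivAt_x {f : ℝ → ℝ → ℝ} (hf : Smooth2 f) (x t : ℝ) :
    HasDerivAt (fun y => f y t) (pdx f x t) x :=
  (((hf.sliceX t).differentiable (by simp)) x).hasDerivAt

lemma hasDerivAt_t {f : ℝ → ℝ → ℝ} (hf : Smooth2 f) (x t : ℝ) :
    HasDerivAt (fun s => f x s) (pdt f x t) t :=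
  (((hf.sliceT x).differentiable (by simp)) t).hasDerivAt

lemma pdx_eq_fderiv {f : ℝ → ℝ → ℝ} (hf : Smooth2 f) (x t : ℝ) :
    pdx f x t = fderiv ℝ (fun p : ℝ × ℝ => f p.1 p.2) (x, t) (1, 0) := by
  have h1 : HasDerivAt (fun y : ℝ => (y, t)) ((1 : ℝ), (0 : ℝ)) x :=
    (hasDerivAt_id x).prodMk (hasDerivAt_const x t)
  have h2 : HasFDerivAt (fun p : ℝ × ℝ => f p.1 p.2)
      (fderiv ℝ (fun p : ℝ × ℝ => f p.1 p.2) (x, t)) (x, t) :=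
    (hf.differentiable (by simp) (x, t)).hasFDerivAt
  have h3 := h2.comp_hasDerivAt_of_eq x h1 rfl
  exact h3.deriv

lemma pdt_eq_fderiv {f : ℝ → ℝ → ℝ} (hf : Smooth2 f) (x t : ℝ) :
    pdt f x t = fderiv ℝ (fun p : ℝ × ℝ => f p.1 p.2) (x, t) (0, 1) := by
  have h1 : HasDerivAt (fun s : ℝ => (x, s)) ((0 : ℝ), (1 : ℝ)) t :=
    (hasDerivAt_const t x).prodMk (hasDerivAt_id t)
  have h2 : HasFDerivAt (fun p : ℝ × ℝ => f p.1 p.2)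
      (fderiv ℝ (fun p : ℝ × ℝ => f p.1 p.2) (x, t)) (x, t) :=
    (hf.differentiable (by simp) (x, t)).hasFDerivAt
  exact (h2.comp_hasDerivAt_of_eq t h1 rfl).deriv

lemma pdx' {f : ℝ → ℝ → ℝ} (hf : Smooth2 f) : Smooth2 (pdx f) := by
  have h : (fun p : ℝ × ℝ => pdx f p.1 p.2)
      = fun p : ℝ × ℝ => fderiv ℝ (fun q : ℝ × ℝ => f q.1 q.2) p (1, 0) := by
    funext p
    exact hf.pdx_eq_fderiv p.1 p.2
  unfold Smooth2
  rw [h]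
  exact (hf.fderiv_right (by simp)).clm_apply contDiff_const

lemma pdt' {f : ℝ → ℝ → ℝ} (hf : Smooth2 f) : Smooth2 (pdt f) := by
  have h : (fun p : ℝ × ℝ => pdt f p.1 p.2)
      = fun p : ℝ × ℝ => fderiv ℝ (fun q : ℝ × ℝ => f q.1 q.2) p (0, 1) := by
    funext p
    exact hf.pdt_eq_fderiv p.1 p.2
  unfold Smooth2
  rw [h]
  exact (hf.fderiv_right (by simp)).clm_apply contDiff_const

end Smooth2

lemma pdt_pdx_comm {f : ℝ → ℝ → ℝ} (hf : Smooth2 f) (x t : ℝ) :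
    pdt (pdx f) x t = pdx (pdt f) x t := by
  set F := fun p : ℝ × ℝ => f p.1 p.2 with hF
  have hFc : ContDiff ℝ (⊤ : ℕ∞) F := hf
  have hd1 : ∀ p, HasFDerivAt F (fderiv ℝ F p) p :=
    fun p => (hFc.differentiable (by simp) p).hasFDerivAt
  have hd2 : HasFDerivAt (fderiv ℝ F) (fderiv ℝ (fderiv ℝ F) (x, t)) (x, t) :=
    (((hFc.fderiv_right (m := (⊤ : ℕ∞)) (by simp)).differentiable (by simp)) (x, t)).hasFDerivAt
  have sym := second_derivative_symmetric hd1 hd2 ((1 : ℝ), (0 : ℝ)) ((0 : ℝ), (1 : ℝ))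
  have e1 : pdt (pdx f) x t = fderiv ℝ (fderiv ℝ F) (x, t) (0, 1) (1, 0) := by
    have h1 : HasDerivAt (fun s : ℝ => (x, s)) ((0 : ℝ), (1 : ℝ)) t :=
      (hasDerivAt_const t x).prodMk (hasDerivAt_id t)
    have h2 : HasDerivAt (fun s : ℝ => fderiv ℝ F (x, s))
        (fderiv ℝ (fderiv ℝ F) (x, t) (0, 1)) t := hd2.comp_hasDerivAt_of_eq t h1 rfl
    have h3 := h2.clm_apply (hasDerivAt_const t ((1 : ℝ), (0 : ℝ)))
    simp only [map_zero, add_zero] at h3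
    have h4 : (fun s : ℝ => pdx f x s) = fun s : ℝ => fderiv ℝ F (x, s) (1, 0) := by
      funext s
      exact hf.pdx_eq_fderiv x s
    show deriv (fun s : ℝ => pdx f x s) t = _
    rw [h4]
    exact h3.deriv
  have e2 : pdx (pdt f) x t = fderiv ℝ (fderiv ℝ F) (x, t) (1, 0) (0, 1) := by
    have h1 : HasDerivAt (fun y : ℝ => (y, t)) ((1 : ℝ), (0 : ℝ)) x :=
      (hasDerivAt_id x).prodMk (hasDerivAt_const x t)
    have h2 : HasDerivAt (fun y : ℝ => fderiv ℝ F (y, t))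
        (fderiv ℝ (fderiv ℝ F) (x, t) (1, 0)) x := hd2.comp_hasDerivAt_of_eq x h1 rfl
    have h3 := h2.clm_apply (hasDerivAt_const x ((0 : ℝ), (1 : ℝ)))
    simp only [map_zero, add_zero] at h3
    have h4 : (fun y : ℝ => pdt f y t) = fun y : ℝ => fderiv ℝ F (y, t) (0, 1) := by
      funext y
      exact hf.pdt_eq_fderiv y t
    show deriv (fun y : ℝ => pdt f y t) x = _
    rw [h4]
    exact h3.deriv
  rw [e1, e2, sym]

/-- The conserved current component `Cˣ` associated with the Galilean-boost
symmetry `V3` via Ibragimov's conservation theorem. -/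
noncomputable def Cx3 (u v w φ ψ θ : ℝ → ℝ → ℝ) (x t : ℝ) : ℝ :=
  1/3 * ψ x t * (u x t)^2 - 5/6 * t * pdt u x t * φ x t
    - 5/6 * t * pdt v x t * ψ x t - 5/6 * t * pdt w x t * θ x t
    + 5/24 * t * pdx u x t * pdx (pdx θ) x t + 1/6 * v x t * θ x t * u x t
    - 5/24 * t * pdx (pdx u) x t * pdx θ x t + 1/4 * pdx (pdx θ) x t
    - 2/3 * ψ x t * v x t - θ x t * w x t - 5/6 * φ x t * u x t

/-- The conserved current component `Cᵗ` associated with `V3`. -/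
noncomputable def Ct3 (u v w φ ψ θ : ℝ → ℝ → ℝ) (x t : ℝ) : ℝ :=
  φ x t + 5/6 * φ x t * t * pdx u x t - 2/3 * ψ x t * u x t
    + 5/6 * ψ x t * t * pdx v x t - 1/3 * v x t * θ x t
    + 5/6 * θ x t * t * pdx w x t

/-- `(Cˣ, Cᵗ)` is a conserved current: `∂ₓCˣ + ∂ₜCᵗ = 0` on ℝ². -/
theorem stmt_17 (u v w φ ψ θ : ℝ → ℝ → ℝ)
    (hu : Smooth2 u) (hv : Smooth2 v) (hw : Smooth2 w)
    (hφ : Smooth2 φ) (hψ : Smooth2 ψ) (hθ : Smooth2 θ)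
    (hKB : ∀ x t : ℝ, KBAt u v w x t)
    (hAKB : ∀ x t : ℝ, AKBAt φ ψ θ u v w x t) :
    ∀ x t : ℝ, pdx (Cx3 u v w φ ψ θ) x t + pdt (Ct3 u v w φ ψ θ) x t = 0 := by
  intro x t
  have hux : Smooth2 (pdx u) := hu.pdx'
  have huxx : Smooth2 (pdx (pdx u)) := hux.pdx'
  have huxxx : Smooth2 (pdx (pdx (pdx u))) := huxx.pdx'
  have hvx : Smooth2 (pdx v) := hv.pdx'
  have hwx : Smooth2 (pdx w) := hw.pdx'
  have hθx : Smooth2 (pdx θ) := hθ.pdx'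
  have hθxx : Smooth2 (pdx (pdx θ)) := hθx.pdx'
  have hut : Smooth2 (pdt u) := hu.pdt'
  have hvt : Smooth2 (pdt v) := hv.pdt'
  have hwt : Smooth2 (pdt w) := hw.pdt'
  -- x-slice derivative facts
  have XU := hu.hasDerivAt_x x t
  have XV := hv.hasDerivAt_x x t
  have XW := hw.hasDerivAt_x x t
  have XP := hφ.hasDerivAt_x x t
  have XQ := hψ.hasDerivAt_x x t
  have XR := hθ.hasDerivAt_x x t
  have XUx := hux.hasDerivAt_x x t
  have XUxx := huxx.hasDerivAt_x x t
  have XUxxx := huxxx.hasDerivAt_x x t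
  have XVx := hvx.hasDerivAt_x x t
  have XWx := hwx.hasDerivAt_x x t
  have XRx := hθx.hasDerivAt_x x t
  have XRxx := hθxx.hasDerivAt_x x t
  have XUt := hut.hasDerivAt_x x t
  have XVt := hvt.hasDerivAt_x x t
  have XWt := hwt.hasDerivAt_x x t
  -- t-slice derivative facts
  have TP := hφ.hasDerivAt_t x t
  have TQ := hψ.hasDerivAt_t x t
  have TR := hθ.hasDerivAt_t x t
  have TU := hu.hasDerivAt_t x t
  have TV := hv.hasDerivAt_t x t
  have TUx := hux.hasDerivAt_t x t
  have TVx := hvx.hasDerivAt_t x t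
  have TWx := hwx.hasDerivAt_t x t
  have Tid : HasDerivAt (fun s : ℝ => s) 1 t := hasDerivAt_id t
  have HX :=
    (((((((((((XQ.const_mul (1/3 : ℝ)).mul (XU.pow 2)).sub
      ((XUt.const_mul (5/6 * t)).mul XP)).sub
      ((XVt.const_mul (5/6 * t)).mul XQ)).sub
      ((XWt.const_mul (5/6 * t)).mul XR)).add
      ((XUx.const_mul (5/24 * t)).mul XRxx)).add
      (((XV.const_mul (1/6 : ℝ)).mul XR).mul XU)).sub
      ((XUxx.const_mul (5/24 * t)).mul XRx)).add
      (XRxx.const_mul (1/4 : ℝ))).sub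
      ((XQ.const_mul (2/3 : ℝ)).mul XV)).sub
      (XR.mul XW)).sub
      ((XP.const_mul (5/6 : ℝ)).mul XU)
  have hD : pdx (Cx3 u v w φ ψ θ) x t = _ := HX.deriv
  have HT :=
    ((((TP.add (((TP.const_mul (5/6 : ℝ)).mul Tid).mul TUx)).sub
      ((TQ.const_mul (2/3 : ℝ)).mul TU)).add
      (((TQ.const_mul (5/6 : ℝ)).mul Tid).mul TVx)).sub
      ((TV.const_mul (1/3 : ℝ)).mul TR)).add
      (((TR.const_mul (5/6 : ℝ)).mul Tid).mul TWx)
  have hE : pdt (Ct3 u v w φ ψ θ) x t = _ := HT.deriv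
  obtain ⟨k1, k2, k3⟩ := hKB x t
  obtain ⟨a1, a2, a3⟩ := hAKB x t
  have hc1 : pdx (pdt u) x t = 3/2 * pdx u x t * pdx u x t
      + 3/2 * u x t * pdx (pdx u) x t + pdx (pdx v) x t := by
    have e : pdt u = fun a b => 3/2 * u a b * pdx u a b + pdx v a b :=
      funext fun a => funext fun b => (hKB a b).1
    rw [e]
    exact ((((hu.hasDerivAt_x x t).const_mul (3/2 : ℝ)).mul
      (hux.hasDerivAt_x x t)).add (hvx.hasDerivAt_x x t)).deriv
  have hc2 : pdx (pdt v) x t = pdx v x t * pdx u x t + v x t * pdx (pdx u) x t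
      + (1/2 * pdx u x t * pdx v x t + 1/2 * u x t * pdx (pdx v) x t)
      + pdx (pdx w) x t := by
    have e : pdt v = fun a b => v a b * pdx u a b + 1/2 * u a b * pdx v a b + pdx w a b :=
      funext fun a => funext fun b => (hKB a b).2.1
    rw [e]
    exact ((((hv.hasDerivAt_x x t).mul (hux.hasDerivAt_x x t)).add
      (((hu.hasDerivAt_x x t).const_mul (1/2 : ℝ)).mul (hvx.hasDerivAt_x x t))).add
      (hwx.hasDerivAt_x x t)).deriv
  have hc3 : pdx (pdt w) x t = -(1/4) * pdx (pdx (pdx (pdx u))) x t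
      + (pdx w x t * pdx u x t + w x t * pdx (pdx u) x t)
      + (1/2 * pdx u x t * pdx w x t + 1/2 * u x t * pdx (pdx w) x t) := by
    have e : pdt w = fun a b => -(1/4) * pdx (pdx (pdx u)) a b + w a b * pdx u a b
        + 1/2 * u a b * pdx w a b :=
      funext fun a => funext fun b => (hKB a b).2.2
    rw [e]
    exact ((((huxxx.hasDerivAt_x x t).const_mul (-(1/4) : ℝ)).add
      ((hw.hasDerivAt_x x t).mul (hux.hasDerivAt_x x t))).add
      (((hu.hasDerivAt_x x t).const_mul (1/2 : ℝ)).mul (hwx.hasDerivAt_x x t))).deriv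
  rw [hD, hE, pdt_pdx_comm hu x t, pdt_pdx_comm hv x t, pdt_pdx_comm hw x t,
    hc1, hc2, hc3, k1, k2, k3, a1, a2, a3]
  simp only [Pi.mul_apply, Pi.add_apply, Pi.sub_apply, Pi.pow_apply]
  ring
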